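/- Suppose f, b, μ ∈ V* and ψ, y ∈ V satisfy a(y, v) + μ(v) = f(v) + b(v) for all v ∈ V, together with the sign condition μ(y − ψ) ≥ 0. Then (C_a/3)·‖y‖² ≤ (3C_b²/(4C_a) + 1/2)·‖ψ‖² + (3/(4C_a) + 1/2)·(‖f‖_{V*} + ‖b‖_{V*})². In particular ‖y‖ ≤ C·(‖f‖_{V*} + ‖b‖_{V*} + ‖ψ‖) for a constant C > 0 depending only on C_a and C_b. -/
import Mathlib


set_option maxHeartbeats 800000 in
/-- A priori bound for the penalised equation: if `a(y, ·) + μ = f + b` with the sign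
condition `μ(y - ψ) ≥ 0`, then `(C_a/3)‖y‖² ≤ (3C_b²/(4C_a) + 1/2)‖ψ‖² +
(3/(4C_a) + 1/2)(‖f‖ + ‖b‖)²`; in particular `‖y‖ ≤ C (‖f‖ + ‖b‖ + ‖ψ‖)` for a constant
`C > 0` depending only on `C_a, C_b`. -/
theorem penalised_apriori_estimate {V : Type*} [NormedAddCommGroup V] [NormedSpace ℝ V]
    (a : V →ₗ[ℝ] V →ₗ[ℝ] ℝ) (Ca Cb : ℝ) (hCa : 0 < Ca) (hCb : 0 < Cb)
    (hcoer : ∀ y : V, Ca * ‖y‖ ^ 2 ≤ a y y)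
    (hbdd : ∀ y z : V, |a y z| ≤ Cb * ‖y‖ * ‖z‖) :
    (∀ (f b μ : V →L[ℝ] ℝ) (ψ y : V),
      (∀ v : V, a y v + μ v = f v + b v) → 0 ≤ μ (y - ψ) →
        Ca / 3 * ‖y‖ ^ 2 ≤
          (3 * Cb ^ 2 / (4 * Ca) + 1 / 2) * ‖ψ‖ ^ 2 +
            (3 / (4 * Ca) + 1 / 2) * (‖f‖ + ‖b‖) ^ 2) ∧
    ∃ C > (0 : ℝ), ∀ (f b μ : V →L[ℝ] ℝ) (ψ y : V),
      (∀ v : V, a y v + μ v = f v + b v) → 0 ≤ μ (y - ψ) →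
        ‖y‖ ≤ C * (‖f‖ + ‖b‖ + ‖ψ‖) := by
  have main : ∀ (f b μ : V →L[ℝ] ℝ) (ψ y : V),
      (∀ v : V, a y v + μ v = f v + b v) → 0 ≤ μ (y - ψ) →
        Ca / 3 * ‖y‖ ^ 2 ≤
          (3 * Cb ^ 2 / (4 * Ca) + 1 / 2) * ‖ψ‖ ^ 2 +
            (3 / (4 * Ca) + 1 / 2) * (‖f‖ + ‖b‖) ^ 2 := by
    intro f b μ ψ y heq hsign
    have h1 : a y (y - ψ) + μ (y - ψ) = f (y - ψ) + b (y - ψ) := heq _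
    have hsub : a y (y - ψ) = a y y - a y ψ := map_sub _ _ _
    have hnorm : ‖y - ψ‖ ≤ ‖y‖ + ‖ψ‖ := norm_sub_le _ _
    have hf : f (y - ψ) ≤ ‖f‖ * ‖y - ψ‖ := le_trans (le_abs_self _) (f.le_opNorm _)
    have hb : b (y - ψ) ≤ ‖b‖ * ‖y - ψ‖ := le_trans (le_abs_self _) (b.le_opNorm _)
    have haψ : a y ψ ≤ Cb * ‖y‖ * ‖ψ‖ := le_trans (le_abs_self _) (hbdd y ψ)
    have hcy := hcoer y
    have hfn : (0:ℝ) ≤ ‖f‖ := norm_nonneg _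
    have hbn : (0:ℝ) ≤ ‖b‖ := norm_nonneg _
    have hyn : (0:ℝ) ≤ ‖y‖ := norm_nonneg _
    have hψn : (0:ℝ) ≤ ‖ψ‖ := norm_nonneg _
    have key : Ca * ‖y‖ ^ 2 ≤ (‖f‖ + ‖b‖) * (‖y‖ + ‖ψ‖) + Cb * ‖y‖ * ‖ψ‖ := by
      nlinarith [mul_le_mul_of_nonneg_left hnorm hfn, mul_le_mul_of_nonneg_left hnorm hbn]
    have young1 : Cb * ‖y‖ * ‖ψ‖ ≤ Ca / 3 * ‖y‖ ^ 2 + 3 * Cb ^ 2 / (4 * Ca) * ‖ψ‖ ^ 2 := by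
      have e1 : Ca / 3 * ‖y‖ ^ 2 + 3 * Cb ^ 2 / (4 * Ca) * ‖ψ‖ ^ 2
          = (4 * Ca ^ 2 * ‖y‖ ^ 2 + 9 * Cb ^ 2 * ‖ψ‖ ^ 2) / (12 * Ca) := by
        field_simp; ring
      rw [e1, le_div_iff₀ (by positivity)]
      nlinarith [sq_nonneg (2 * Ca * ‖y‖ - 3 * Cb * ‖ψ‖)]
    have young2 : (‖f‖ + ‖b‖) * ‖y‖ ≤ Ca / 3 * ‖y‖ ^ 2 + 3 / (4 * Ca) * (‖f‖ + ‖b‖) ^ 2 := by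
      have e1 : Ca / 3 * ‖y‖ ^ 2 + 3 / (4 * Ca) * (‖f‖ + ‖b‖) ^ 2
          = (4 * Ca ^ 2 * ‖y‖ ^ 2 + 9 * (‖f‖ + ‖b‖) ^ 2) / (12 * Ca) := by
        field_simp; ring
      rw [e1, le_div_iff₀ (by positivity)]
      nlinarith [sq_nonneg (2 * Ca * ‖y‖ - 3 * (‖f‖ + ‖b‖))]
    have young3 : (‖f‖ + ‖b‖) * ‖ψ‖ ≤ 1 / 2 * (‖f‖ + ‖b‖) ^ 2 + 1 / 2 * ‖ψ‖ ^ 2 := by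
      nlinarith [sq_nonneg (‖f‖ + ‖b‖ - ‖ψ‖)]
    nlinarith [key, young1, young2, young3]
  set S : ℝ := (3 * Cb ^ 2 / (4 * Ca) + 1 / 2) + (3 / (4 * Ca) + 1 / 2) with hS
  have hSpos : 0 < S := by positivity
  refine ⟨main, Real.sqrt (3 * S / Ca), Real.sqrt_pos.2 (by positivity), ?_⟩
  intro f b μ ψ y heq hsign
  have hCdef : Real.sqrt (3 * S / Ca) ^ 2 = 3 * S / Ca := Real.sq_sqrt (by positivity)
  set T : ℝ := ‖f‖ + ‖b‖ + ‖ψ‖ with hT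
  have hTn : (0:ℝ) ≤ T := by positivity
  have h1 := main f b μ ψ y heq hsign
  have hψT : ‖ψ‖ ^ 2 ≤ T ^ 2 := by
    have : ‖ψ‖ ≤ T := by rw [hT]; nlinarith [norm_nonneg f, norm_nonneg b]
    exact pow_le_pow_left₀ (norm_nonneg _) this 2
  have hLT : (‖f‖ + ‖b‖) ^ 2 ≤ T ^ 2 := by
    have : ‖f‖ + ‖b‖ ≤ T := by rw [hT]; nlinarith [norm_nonneg ψ]
    exact pow_le_pow_left₀ (by positivity) this 2
  have c1 : (0:ℝ) ≤ 3 * Cb ^ 2 / (4 * Ca) + 1 / 2 := by positivity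
  have c2 : (0:ℝ) ≤ 3 / (4 * Ca) + 1 / 2 := by positivity
  have h2 : Ca / 3 * ‖y‖ ^ 2 ≤ S * T ^ 2 := by
    have := add_le_add (mul_le_mul_of_nonneg_left hψT c1) (mul_le_mul_of_nonneg_left hLT c2)
    rw [hS]; linarith [this, h1]
  have h3 : ‖y‖ ^ 2 ≤ (Real.sqrt (3 * S / Ca) * T) ^ 2 := by
    rw [mul_pow, hCdef]
    have h4 := mul_le_mul_of_nonneg_left h2 (by positivity : (0:ℝ) ≤ 3 / Ca)
    calc ‖y‖ ^ 2 = 3 / Ca * (Ca / 3 * ‖y‖ ^ 2) := by field_simp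
      _ ≤ 3 / Ca * (S * T ^ 2) := h4
      _ = 3 * S / Ca * T ^ 2 := by ring
  calc ‖y‖ = Real.sqrt (‖y‖ ^ 2) := (Real.sqrt_sq (norm_nonneg _)).symm
    _ ≤ Real.sqrt ((Real.sqrt (3 * S / Ca) * T) ^ 2) := Real.sqrt_le_sqrt h3
    _ = Real.sqrt (3 * S / Ca) * T :=
        Real.sqrt_sq (mul_nonneg (Real.sqrt_nonneg _) hTn)
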